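/- arXiv:1508.02038 — 5 statements merged into one kernel-verified Lean document; each statement's English description precedes it below -/
import Mathlib

section
/- Let F be a field, A an associative unital F-algebra, S an F-subspace of A, and (q, p) a pfaffian datum on S. Let x ∈ S satisfy x² = 0 and q(x) = 0, and suppose there exists w ∈ S with p(w) = −w and −x·w + w·p(x) = 1_A. Then p(x) = −x. -/
/-!
Since `q x = 0`, both `x * p x` and `p x * x` vanish, so expanding the pfaffian identity for
`x + p x` gives `(p x) ^ 2 = c` with `c = q (x + p x)`. Multiplying the relation
`-(x * w) + w * p x = 1` on the right by `p x`, and using `x ^ 2 = 0`, yields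
`c • w = x + p x`. If `c = 0` this is the claim; otherwise `p x` is invertible, so
`x * p x = 0` forces `x = 0`.
-/

theorem mul_sq_eq_add_of_neg_mul_add_mul_eq_one {R : Type*} [Ring R] {x y w : R}
    (hx : x ^ 2 = 0) (h : -(x * w) + w * y = 1) : w * y ^ 2 = x + y := by
  have hxwy : x * w * y = x :=
    calc x * w * y = x * (-(x * w) + w * y) + x ^ 2 * w := by noncomm_ring
      _ = x := by rw [h, hx]; noncomm_ring
  calc w * y ^ 2 = (-(x * w) + w * y) * y + x * w * y := by noncomm_ring
    _ = x + y := by rw [h, hxwy]; noncomm_ring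

theorem eq_zero_of_mul_eq_zero_of_sq_eq_smul_one {F A : Type*} [Field F] [Ring A] [Algebra F A]
    {x y : A} {c : F} (hxy : x * y = 0) (hy : y ^ 2 = c • 1) (hc : c ≠ 0) : x = 0 := by
  have hcx : c • x = 0 :=
    calc c • x = x * y ^ 2 := by rw [hy, mul_smul_comm, mul_one]
      _ = 0 := by rw [sq, ← mul_assoc, hxy, zero_mul]
  exact (smul_eq_zero.mp hcx).resolve_left hc

theorem sq_add_sq_of_pfaffian {F A : Type*} [Field F] [Ring A] [Algebra F A]
    {S : Submodule F A} {q : S → F} {p : S →ₗ[F] S}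
    (hqp : ∀ x : S, (x : A) * (p x : A) = q x • (1 : A))
    (hpq : ∀ x : S, (p x : A) * (x : A) = q x • (1 : A))
    (hpp : ∀ x : S, p (p x) = x) (x : S) :
    (p x : A) ^ 2 + (x : A) ^ 2 = (q (x + p x) - 2 * q x) • (1 : A) := by
  have hsum := hqp (x + p x)
  rw [map_add, hpp] at hsum
  push_cast at hsum
  calc (p x : A) ^ 2 + (x : A) ^ 2
      = ((x : A) + p x) * (p x + x) - x * p x - p x * x := by noncomm_ring
    _ = (q (x + p x) - 2 * q x) • (1 : A) := by rw [hsum, hqp, hpq]; module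

theorem pfaffian_adjoint_of_square_zero_general
    {F A : Type*} [Field F] [Ring A] [Algebra F A]
    (S : Submodule F A) (q : S → F) (p : S →ₗ[F] S)
    (hqp : ∀ x : S, (x : A) * (p x : A) = q x • (1 : A))
    (hpq : ∀ x : S, (p x : A) * (x : A) = q x • (1 : A))
    (hpp : ∀ x : S, p (p x) = x)
    (x : S) (hx2 : (x : A) ^ 2 = 0) (hqx : q x = 0)
    (w : S)
    (hbw : -((x : A) * (w : A)) + (w : A) * (p x : A) = 1) :
    p x = -x := by
  set c := q (x + p x)
  have hxy : (x : A) * p x = 0 := by rw [hqp, hqx, zero_smul]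
  have hyy : (p x : A) ^ 2 = c • (1 : A) := by
    simpa [hx2, hqx] using sq_add_sq_of_pfaffian hqp hpq hpp x
  have hcw : c • (w : A) = x + p x := by
    rw [← mul_sq_eq_add_of_neg_mul_add_mul_eq_one hx2 hbw, hyy, mul_smul_comm, mul_one]
  by_cases hc : c = 0
  · rw [hc, zero_smul] at hcw
    exact Subtype.ext (eq_neg_of_add_eq_zero_right hcw.symm)
  · have hx0 : x = 0 := Subtype.ext (eq_zero_of_mul_eq_zero_of_sq_eq_smul_one hxy hyy hc)
    rw [hx0, map_zero, neg_zero]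

/-- Let `F` be a field, `A` an associative unital `F`-algebra, `S` an
`F`-subspace of `A`, and `(q, p)` a pfaffian datum on `S`.  Let `x ∈ S` satisfy `x ^ 2 = 0`
and `q x = 0`, and suppose there exists `w ∈ S` with `p w = -w` and
`-(x * w) + w * p x = 1`.  Then `p x = -x`. -/
theorem pfaffian_adjoint_of_square_zero
    {F A : Type*} [Field F] [Ring A] [Algebra F A]
    (S : Submodule F A) (q : S → F) (p : S →ₗ[F] S)
    (hqp : ∀ x : S, (x : A) * (p x : A) = q x • (1 : A))
    (hpq : ∀ x : S, (p x : A) * (x : A) = q x • (1 : A))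
    (hpp : ∀ x : S, p (p x) = x)
    (x : S) (hx2 : (x : A) ^ 2 = 0) (hqx : q x = 0)
    (w : S) (hw : p w = -w)
    (hbw : -((x : A) * (w : A)) + (w : A) * (p x : A) = 1) :
    p x = -x :=
  pfaffian_adjoint_of_square_zero_general S q p hqp hpq hpp x hx2 hqx w hbw
end

section
/- Let F be a field, A a nonzero associative unital F-algebra with an F-linear involution σ (additive, anti-multiplicative, σ∘σ = id), S = {a − σ(a) : a ∈ A}, and (q, p) a pfaffian datum on S. Suppose u, v ∈ S are such that u·v ∈ S and p(u) = u, p(v) = v, p(u·v) = u·v. Then v·u = −u·v, and u, v, u·v are pairwise orthogonal for the polar form of q, i.e. q(u+v) − q(u) − q(v) = 0, q(u + u·v) − q(u) − q(u·v) = 0, and q(v + u·v) − q(v) − q(u·v) = 0. -/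
/-- Let `F` be a field, `A` a nonzero associative unital `F`-algebra with
an `F`-linear involution `σ` (additive, anti-multiplicative, `σ ∘ σ = id`),
`S = {a - σ a : a ∈ A}`, and `(q, p)` a pfaffian datum on `S`.  Suppose `u, v ∈ S` are such
that `u * v ∈ S` and `p u = u`, `p v = v`, `p (u * v) = u * v`.  Then `v * u = -(u * v)`,
and `u`, `v`, `u * v` are pairwise orthogonal for the polar form of `q`, i.e.
`q (u + v) - q u - q v = 0`, `q (u + u * v) - q u - q (u * v) = 0` and
`q (v + u * v) - q v - q (u * v) = 0`. -/
theorem pfaffian_basis_orthogonal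
    {F A : Type*} [Field F] [Ring A] [Algebra F A] [Nontrivial A]
    (σ : A →ₗ[F] A)
    (hσm : ∀ a b : A, σ (a * b) = σ b * σ a) (hσi : ∀ a : A, σ (σ a) = a)
    (S : Submodule F A)
    (hS : S = LinearMap.range (LinearMap.id - σ))
    (q : S → F) (p : S →ₗ[F] S)
    (hqp : ∀ x : S, (x : A) * (p x : A) = q x • (1 : A))
    (hpq : ∀ x : S, (p x : A) * (x : A) = q x • (1 : A))
    (hpp : ∀ x : S, p (p x) = x)
    (u v : S) (huv : (u : A) * (v : A) ∈ S)
    (hpu : p u = u) (hpv : p v = v)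
    (hpuv : p ⟨(u : A) * (v : A), huv⟩ = ⟨(u : A) * (v : A), huv⟩) :
    (v : A) * (u : A) = -((u : A) * (v : A)) ∧
    q (u + v) - q u - q v = 0 ∧
    q (u + ⟨(u : A) * (v : A), huv⟩) - q u - q ⟨(u : A) * (v : A), huv⟩ = 0 ∧
    q (v + ⟨(u : A) * (v : A), huv⟩) - q v - q ⟨(u : A) * (v : A), huv⟩ = 0 := by
  have hneg : ∀ x : S, σ (x : A) = -(x : A) := by
    intro x
    have hx : (x : A) ∈ LinearMap.range (LinearMap.id - σ) := hS ▸ x.2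
    obtain ⟨a, ha⟩ := hx
    have ha' : a - σ a = (x : A) := by simpa using ha
    rw [← ha', map_sub, hσi]
    abel
  have hσu := hneg u
  have hσv := hneg v
  have hσuv : σ ((u : A) * (v : A)) = -((u : A) * (v : A)) := hneg ⟨_, huv⟩
  have hvu : (v : A) * (u : A) = -((u : A) * (v : A)) := by
    rw [hσm, hσu, hσv, neg_mul_neg] at hσuv
    exact hσuv
  have hinj : ∀ c : F, c • (1 : A) = 0 → c = 0 := by
    intro c hc
    rcases smul_eq_zero.mp hc with h | h
    · exact h
    · exact (one_ne_zero h).elim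
  have huu : (u : A) * u = q u • 1 := by have := hqp u; rwa [hpu] at this
  have hvv : (v : A) * v = q v • 1 := by have := hqp v; rwa [hpv] at this
  have huvuv : ((u : A) * v) * ((u : A) * v) = q ⟨(u : A) * (v : A), huv⟩ • 1 := by
    have := hqp ⟨(u : A) * (v : A), huv⟩
    rwa [hpuv] at this
  refine ⟨hvu, ?_, ?_, ?_⟩
  · apply hinj
    have h := hqp (u + v)
    rw [map_add, hpu, hpv, Submodule.coe_add] at h
    rw [sub_smul, sub_smul, ← h]
    simp only [add_mul, mul_add]
    rw [huu, hvv, hvu]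
    abel
  · apply hinj
    have h := hqp (u + ⟨(u : A) * (v : A), huv⟩)
    rw [map_add, hpu, hpuv, Submodule.coe_add] at h
    rw [sub_smul, sub_smul, ← h]
    simp only [add_mul, mul_add]
    rw [huu, huvuv, mul_assoc (u : A) (v : A) (u : A), hvu, mul_neg]
    abel
  · apply hinj
    have h := hqp (v + ⟨(u : A) * (v : A), huv⟩)
    rw [map_add, hpv, hpuv, Submodule.coe_add] at h
    rw [sub_smul, sub_smul, ← h]
    simp only [add_mul, mul_add]
    rw [hvv, huvuv, ← mul_assoc (v : A) (u : A) (v : A), hvu, neg_mul]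
    abel
end

section
/- Let A be a unital associative ring with an involution σ (an additive, anti-multiplicative map with σ∘σ = id). If A contains a metabolic idempotent with respect to σ, i.e. an element e with e² = e, σ(e)·e = 0 and (1 − e)·(1 − σ(e)) = 0, then there exists an element u ∈ Alt(A,σ) = {a − σ(a) : a ∈ A} with u² = 1. -/
/-- Let `A` be a unital associative ring with an involution `σ` (an
additive, anti-multiplicative map with `σ ∘ σ = id`).  If `A` contains a metabolic
idempotent with respect to `σ`, i.e. an element `e` with `e ^ 2 = e`, `σ e * e = 0` and
`(1 - e) * (1 - σ e) = 0`, then there exists `u ∈ Alt(A,σ) = {a - σ a : a ∈ A}` with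
`u ^ 2 = 1`. -/
theorem exists_alternating_unit_of_metabolic
    {A : Type*} [Ring A] (σ : A → A)
    (hadd : ∀ x y : A, σ (x + y) = σ x + σ y)
    (hmul : ∀ x y : A, σ (x * y) = σ y * σ x)
    (hinv : ∀ x : A, σ (σ x) = x)
    (hmet : ∃ e : A, e ^ 2 = e ∧ σ e * e = 0 ∧ (1 - e) * (1 - σ e) = 0) :
    ∃ u : A, (∃ a : A, u = a - σ a) ∧ u ^ 2 = 1 := by
  obtain ⟨e, he, h0, h1⟩ := hmet
  refine ⟨e - σ e, ⟨e, rfl⟩, ?_⟩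
  have he2 : e * e = e := by rw [← sq]; exact he
  have hE : e * σ e = σ e + e - 1 := by
    have h1' : 1 - σ e - e + e * σ e = 0 := by
      have : (1 - e) * (1 - σ e) = 1 - σ e - e + e * σ e := by noncomm_ring
      rw [← this]; exact h1
    linear_combination (norm := noncomm_ring) h1'
  have hs : σ e * σ e = σ e := by
    have := congrArg σ he2
    rw [hmul] at this
    exact this
  calc (e - σ e) ^ 2 = e * e - e * σ e - σ e * e + σ e * σ e := by noncomm_ring
    _ = e - (σ e + e - 1) - 0 + σ e := by rw [he2, hE, h0, hs]
    _ = 1 := by noncomm_ring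
end

section
/- Let F be a field of characteristic 2 and let α, β ∈ F. If the bilinear 2-fold Pfister form ⟨⟨α, β⟩⟩ is anisotropic, then ⟨⟨α, β⟩⟩ is not isometric to ⟨⟨α + 1, β⟩⟩. -/
/-- The bilinear `2`-fold Pfister form `⟨⟨γ, δ⟩⟩` on `F⁴`: the symmetric bilinear form with
Gram matrix `diag(1, γ, δ, γ * δ)`. -/
def twoPfister {F : Type*} [Field F] (γ δ : F) : (Fin 4 → F) → (Fin 4 → F) → F :=
  fun v w => v 0 * w 0 + γ * (v 1 * w 1) + δ * (v 2 * w 2) + γ * δ * (v 3 * w 3)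

/-- A bilinear form `B` on `F⁴` is isotropic if `B v v = 0` for some `v ≠ 0`; it is
anisotropic otherwise. -/
def BilinIsotropic {F : Type*} [Field F] (B : (Fin 4 → F) → (Fin 4 → F) → F) : Prop :=
  ∃ v : Fin 4 → F, v ≠ 0 ∧ B v v = 0

/-- Two bilinear forms `B`, `B'` on `F⁴` are isometric if there is an `F`-linear
automorphism `e` of `F⁴` with `B' (e v) (e w) = B v w` for all `v, w`. -/
def BilinIsometric {F : Type*} [Field F]
    (B B' : (Fin 4 → F) → (Fin 4 → F) → F) : Prop :=
  ∃ e : (Fin 4 → F) ≃ₗ[F] (Fin 4 → F), ∀ v w : Fin 4 → F, B' (e v) (e w) = B v w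

/-- Let `F` be a field of characteristic `2` and `α, β ∈ F`.  If the
bilinear `2`-fold Pfister form `⟨⟨α, β⟩⟩` is anisotropic, then `⟨⟨α, β⟩⟩` is not isometric
to `⟨⟨α + 1, β⟩⟩`. -/
theorem anisotropic_pfister_not_isometric_shift
    {F : Type*} [Field F] [CharP F 2] (α β : F)
    (han : ¬ BilinIsotropic (twoPfister α β)) :
    ¬ BilinIsometric (twoPfister α β) (twoPfister (α + 1) β) := by
  rintro ⟨e, he⟩
  have h2 : (2 : F) = 0 := by exact_mod_cast CharP.cast_eq_zero F 2
  have key : ∀ w : Fin 4 → F, twoPfister α β w w = 0 → w = 0 := by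
    intro w hw
    by_contra hne
    exact han ⟨w, hne, hw⟩
  set v0 : Fin 4 → F := ![1, 0, 0, 0] with hv0
  set v1 : Fin 4 → F := ![0, 1, 0, 0] with hv1
  set a : Fin 4 → F := e v0 with hadef
  set b : Fin 4 → F := e v1 with hbdef
  have h0 : a 0 * a 0 + (α + 1) * (a 1 * a 1) + β * (a 2 * a 2) + (α + 1) * β * (a 3 * a 3)
      = 1 := by
    have := he v0 v0
    simp only [twoPfister, hv0, ← hadef] at this
    simpa using this
  have h1 : b 0 * b 0 + (α + 1) * (b 1 * b 1) + β * (b 2 * b 2) + (α + 1) * β * (b 3 * b 3)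
      = α := by
    have := he v1 v1
    simp only [twoPfister, hv1, ← hbdef] at this
    rw [this]
    simp
  have horth : a 0 * b 0 + (α + 1) * (a 1 * b 1) + β * (a 2 * b 2) + (α + 1) * β * (a 3 * b 3)
      = 0 := by
    have := he v0 v1
    simp only [twoPfister, hv0, hv1, ← hadef, ← hbdef] at this
    rw [this]
    simp
  have ha : (![a 0 + a 1 + 1, a 1, a 2 + a 3, a 3] : Fin 4 → F) = 0 := by
    apply key
    simp only [twoPfister, Matrix.cons_val_zero, Matrix.cons_val_one, Matrix.head_cons,
      Matrix.cons_val_two, Matrix.tail_cons, Matrix.cons_val_three]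
    linear_combination h0 + (a 0 * a 1 + a 0 + a 1 + β * (a 2 * a 3) + 1) * h2
  have hb : (![b 0 + b 1, b 1 + 1, b 2 + b 3, b 3] : Fin 4 → F) = 0 := by
    apply key
    simp only [twoPfister, Matrix.cons_val_zero, Matrix.cons_val_one, Matrix.head_cons,
      Matrix.cons_val_two, Matrix.tail_cons, Matrix.cons_val_three]
    linear_combination h1 + (b 0 * b 1 + α * b 1 + α + β * (b 2 * b 3)) * h2
  have ha0 := congrFun ha 0
  have ha1 := congrFun ha 1
  have ha2 := congrFun ha 2
  have ha3 := congrFun ha 3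
  have hb0 := congrFun hb 0
  have hb1 := congrFun hb 1
  have hb2 := congrFun hb 2
  have hb3 := congrFun hb 3
  simp only [Matrix.cons_val_zero, Matrix.cons_val_one, Matrix.head_cons, Matrix.cons_val_two,
    Matrix.tail_cons, Matrix.cons_val_three, Pi.zero_apply] at ha0 ha1 ha2 ha3 hb0 hb1 hb2 hb3
  have ha0' : a 0 = 1 := by linear_combination ha0 - ha1 - h2
  have ha2' : a 2 = 0 := by linear_combination ha2 - ha3
  have hb1' : b 1 = 1 := by linear_combination hb1 - h2
  have hb0' : b 0 = 1 := by linear_combination hb0 - hb1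
  have hb2' : b 2 = 0 := by linear_combination hb2 - hb3
  rw [ha0', ha1, ha2', ha3, hb0', hb1', hb2', hb3] at horth
  simp at horth
end

section
/- Let F be a field of characteristic 2, let C be a nonzero commutative associative unital F-algebra, and let α, β ∈ F. Suppose x, y, z ∈ C satisfy x² = α·1, y² = β·1, z² = α·β·1, and x·y = a·1 + b·x + c·y + d·z for some a, b, c, d ∈ F with a ≠ 0. Then the bilinear 2-fold Pfister form ⟨⟨α, β⟩⟩ is isotropic. -/
theorem twoPfister_apply_self {F : Type*} [Field F] (γ δ : F) (v : Fin 4 → F) :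
    twoPfister γ δ v v = v 0 ^ 2 + γ * v 1 ^ 2 + δ * v 2 ^ 2 + γ * δ * v 3 ^ 2 := by
  simp only [twoPfister]
  ring

theorem sq_smul_add_smul_of_sq_eq_smul_one {F C : Type*} [CommSemiring F] [CommSemiring C]
    [Algebra F C] [CharP C 2] {α β : F} {x y z : C}
    (hx : x ^ 2 = α • (1 : C)) (hy : y ^ 2 = β • (1 : C)) (hz : z ^ 2 = (α * β) • (1 : C))
    (a b c d : F) :
    (a • (1 : C) + b • x + c • y + d • z) ^ 2
      = (a ^ 2 + α * b ^ 2 + β * c ^ 2 + α * β * d ^ 2) • (1 : C) := by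
  simp only [CharTwo.add_sq, smul_pow, one_pow, hx, hy, hz, smul_smul, add_smul]
  ring_nf

/-- Let `F` be a field of characteristic `2`, `C` a nonzero commutative
associative unital `F`-algebra, and `α, β ∈ F`.  Suppose `x, y, z ∈ C` satisfy
`x ^ 2 = α • 1`, `y ^ 2 = β • 1`, `z ^ 2 = (α * β) • 1`, and
`x * y = a • 1 + b • x + c • y + d • z` for some `a, b, c, d ∈ F` with `a ≠ 0`.  Then the
bilinear `2`-fold Pfister form `⟨⟨α, β⟩⟩` is isotropic. -/
theorem pfister_isotropic_of_product_relation
    {F C : Type*} [Field F] [CharP F 2] [CommRing C] [Algebra F C] [Nontrivial C]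
    (α β : F) (x y z : C)
    (hx : x ^ 2 = α • (1 : C)) (hy : y ^ 2 = β • (1 : C))
    (hz : z ^ 2 = (α * β) • (1 : C))
    (a b c d : F) (ha : a ≠ 0)
    (hxy : x * y = a • (1 : C) + b • x + c • y + d • z) :
    BilinIsotropic (twoPfister α β) := by
  have : CharP C 2 := charP_of_injective_algebraMap (algebraMap F C).injective 2
  have hsq : (α * β) • (1 : C) = (a ^ 2 + α * b ^ 2 + β * c ^ 2 + α * β * d ^ 2) • (1 : C) := by
    rw [← sq_smul_add_smul_of_sq_eq_smul_one hx hy hz, ← hxy, mul_pow, hx, hy,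
      smul_mul_smul_comm, one_mul]
  have hnorm : a ^ 2 + α * b ^ 2 + β * c ^ 2 + α * β * (d + 1) ^ 2 = 0 := by
    linear_combination -smul_left_injective F one_ne_zero hsq
      + α * β * (d + 1) * CharTwo.two_eq_zero (R := F)
  refine ⟨![a, b, c, d + 1], fun h => ha (congrFun h 0), ?_⟩
  simpa [twoPfister_apply_self] using hnorm
end
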